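/- Let b ≠ 0, σ > 0, c > 0, and let u_r(S,t) = S·v_r(log S - σ²t/8) where v_r is given by v_r(z) = -(1/b)[A(z)^{-2/3} + A(z)^{2/3} + 2·log(A(z)^{-1/3} + A(z)^{1/3} - 2)] + d, A(z) = 1 + c·e^{-3z/2} + √(2c·e^{-3z/2} + c²e^{-3z}). Then as S → ∞ (t fixed), u_r(S,t) = (3/b)·S·log S + O(S), i.e. u_r(S,t)/(S·log S) → 3/b. -/

import Mathlib

noncomputable def Afun (c z : ℝ) : ℝ :=
  1 + c * Real.exp (-3 * z / 2)
    + Real.sqrt (2 * c * Real.exp (-3 * z / 2) + c ^ 2 * Real.exp (-3 * z))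

/-- The invariant solution profile `v_r`. -/
noncomputable def vr (b c d z : ℝ) : ℝ :=
  -(1 / b) * ((Afun c z) ^ (-(2 : ℝ) / 3) + (Afun c z) ^ ((2 : ℝ) / 3)
      + 2 * Real.log ((Afun c z) ^ (-(1 : ℝ) / 3) + (Afun c z) ^ ((1 : ℝ) / 3) - 2))
    + d

/-!
With `w = e^{-3z/4}` one has `A - 1 = w (c w + √(2c + c² w²))`, so `A → 1` and
`(A - 1)² ~ 2c e^{-3z/2}` as `z → ∞`. Writing `y = A^{1/3}`,
`y⁻¹ + y - 2 = (A - 1)² / (y (y² + y + 1)²)`, hence the logarithm in `v_r` equals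
`-3z/2 + log (2c/9) + o(1)`. Therefore `v_r(z) = 3z/b + O(1)`, and substituting
`z = log S - σ²t/8` gives `u_r(S,t) / (S log S) → 3/b`.
-/

open Filter Real Topology

lemma log_inv_add_sub_two {y : ℝ} (hy : 0 < y) (hy1 : y ^ 3 ≠ 1) :
    log (y⁻¹ + y - 2) = log ((y ^ 3 - 1) ^ 2) - log (y * (y ^ 2 + y + 1) ^ 2) := by
  have hq : y ^ 2 + y + 1 ≠ 0 := by positivity
  have hfactor : y⁻¹ + y - 2 = (y ^ 3 - 1) ^ 2 / (y * (y ^ 2 + y + 1) ^ 2) := by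
    field_simp
    ring
  rw [hfactor, log_div (pow_ne_zero 2 (sub_ne_zero.mpr hy1)) (by positivity)]

lemma Afun_eq_one_add_exp_mul (c z : ℝ) :
    Afun c z = 1 + exp (-3 * z / 4) *
      (c * exp (-3 * z / 4) + √(2 * c + c ^ 2 * exp (-3 * z / 4) ^ 2)) := by
  have hw2 : exp (-3 * z / 2) = exp (-3 * z / 4) ^ 2 := by
    rw [← exp_nat_mul]; ring_nf
  have hw4 : exp (-3 * z) = exp (-3 * z / 4) ^ 4 := by
    rw [← exp_nat_mul]; ring_nf
  have hsqrt : √(2 * c * exp (-3 * z / 2) + c ^ 2 * exp (-3 * z))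
      = exp (-3 * z / 4) * √(2 * c + c ^ 2 * exp (-3 * z / 4) ^ 2) := by
    rw [hw2, hw4, show ∀ w : ℝ, 2 * c * w ^ 2 + c ^ 2 * w ^ 4 = w ^ 2 * (2 * c + c ^ 2 * w ^ 2)
      from fun w => by ring, sqrt_mul (sq_nonneg _), sqrt_sq (exp_pos _).le]
  rw [Afun, hsqrt, hw2]
  ring

lemma one_lt_Afun {c : ℝ} (hc : 0 < c) (z : ℝ) : 1 < Afun c z := by
  rw [Afun_eq_one_add_exp_mul]
  have hfactor : 0 < c * exp (-3 * z / 4) + √(2 * c + c ^ 2 * exp (-3 * z / 4) ^ 2) := by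
    positivity
  nlinarith [exp_pos (-3 * z / 4)]

lemma tendsto_exp_neg_three_mul_div_four :
    Tendsto (fun z : ℝ => exp (-3 * z / 4)) atTop (𝓝 0) := by
  have h : Tendsto (fun z : ℝ => 3 / 4 * z) atTop atTop :=
    tendsto_id.const_mul_atTop (by norm_num)
  exact (tendsto_exp_neg_atTop_nhds_zero.comp h).congr fun z => by
    simp only [Function.comp]; ring_nf

lemma tendsto_Afun (c : ℝ) : Tendsto (Afun c) atTop (𝓝 1) := by
  have hcont : Continuous fun w : ℝ => 1 + w * (c * w + √(2 * c + c ^ 2 * w ^ 2)) := by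
    fun_prop
  have := (hcont.tendsto 0).comp tendsto_exp_neg_three_mul_div_four
  simp only [mul_zero, zero_mul, add_zero] at this
  exact this.congr fun z => (Afun_eq_one_add_exp_mul c z).symm

lemma tendsto_Afun_rpow (c p : ℝ) : Tendsto (fun z => Afun c z ^ p) atTop (𝓝 1) := by
  simpa using (tendsto_Afun c).rpow_const (p := p) (Or.inl one_ne_zero)

lemma tendsto_exp_mul_Afun_sub_one_sq {c : ℝ} (hc : 0 ≤ c) :
    Tendsto (fun z => exp (3 * z / 2) * (Afun c z - 1) ^ 2) atTop (𝓝 (2 * c)) := by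
  have hcont : Continuous fun w : ℝ => (c * w + √(2 * c + c ^ 2 * w ^ 2)) ^ 2 := by fun_prop
  have := (hcont.tendsto 0).comp tendsto_exp_neg_three_mul_div_four
  have h0 : (c * 0 + √(2 * c + c ^ 2 * 0 ^ 2)) ^ 2 = 2 * c := by
    rw [mul_zero, zero_add, zero_pow two_ne_zero, mul_zero, add_zero, sq_sqrt (by positivity)]
  rw [h0] at this
  refine this.congr fun z => ?_
  have hinv : exp (3 * z / 2) * exp (-3 * z / 4) ^ 2 = 1 := by
    rw [← exp_nat_mul, ← exp_add]; ring_nf; exact exp_zero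
  simp only [Function.comp, Afun_eq_one_add_exp_mul]
  linear_combination
    (-(c * exp (-3 * z / 4) + √(2 * c + c ^ 2 * exp (-3 * z / 4) ^ 2)) ^ 2) * hinv

lemma tendsto_log_Afun_rpow_add {c : ℝ} (hc : 0 < c) :
    Tendsto
      (fun z => log (Afun c z ^ (-(1 : ℝ) / 3) + Afun c z ^ ((1 : ℝ) / 3) - 2) + 3 * z / 2)
      atTop (𝓝 (log (2 * c) - log 9)) := by
  set y : ℝ → ℝ := fun z => Afun c z ^ ((1 : ℝ) / 3) with hy
  have hA_pos (z : ℝ) : 0 < Afun c z := one_pos.trans (one_lt_Afun hc z)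
  have hy_pos (z : ℝ) : 0 < y z := rpow_pos_of_pos (hA_pos z) _
  have hy_cube (z : ℝ) : y z ^ 3 = Afun c z := by
    simp only [hy, one_div]
    exact_mod_cast rpow_inv_natCast_pow (hA_pos z).le three_ne_zero
  have hy_inv (z : ℝ) : Afun c z ^ (-(1 : ℝ) / 3) = (y z)⁻¹ := by
    rw [neg_div, rpow_neg (hA_pos z).le]
  have hy_lim : Tendsto y atTop (𝓝 1) := tendsto_Afun_rpow c _
  have hden : Tendsto (fun z => log (y z * (y z ^ 2 + y z + 1) ^ 2)) atTop (𝓝 (log 9)) := by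
    have := (hy_lim.mul ((((hy_lim.pow 2).add hy_lim).add_const 1).pow 2)).log (by norm_num)
    norm_num at this
    exact this
  have hnum : Tendsto (fun z => log (exp (3 * z / 2) * (Afun c z - 1) ^ 2)) atTop
      (𝓝 (log (2 * c))) :=
    (tendsto_exp_mul_Afun_sub_one_sq hc.le).log (by positivity)
  refine (hnum.sub hden).congr fun z => ?_
  have hA_ne_one : Afun c z ≠ 1 := (one_lt_Afun hc z).ne'
  rw [hy_inv, log_inv_add_sub_two (hy_pos z) (by rwa [hy_cube]), hy_cube,
    log_mul (exp_pos _).ne' (pow_ne_zero 2 (sub_ne_zero.mpr hA_ne_one)), log_exp]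
  ring

lemma tendsto_vr_sub_mul (b d : ℝ) {c : ℝ} (hc : 0 < c) :
    Tendsto (fun z => vr b c d z - 3 / b * z) atTop
      (𝓝 (d - 2 * (1 + log (2 * c) - log 9) / b)) := by
  have hsum := ((tendsto_Afun_rpow c (-(2 : ℝ) / 3)).add
    (tendsto_Afun_rpow c ((2 : ℝ) / 3))).add ((tendsto_log_Afun_rpow_add hc).const_mul 2)
  have := (hsum.const_mul (-(1 / b))).add_const d
  convert this using 2 with z
  · rw [vr]; ring
  · ring

lemma tendsto_comp_sub_div_of_tendsto_sub_mul {f : ℝ → ℝ} {m C : ℝ}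
    (h : Tendsto (fun z => f z - m * z) atTop (𝓝 C)) (k : ℝ) :
    Tendsto (fun x => f (x - k) / x) atTop (𝓝 m) := by
  have hshift := (h.comp (tendsto_atTop_add_const_right _ (-k) tendsto_id)).sub_const (m * k)
  have := (hshift.mul tendsto_inv_atTop_zero).const_add m
  rw [mul_zero, add_zero] at this
  refine this.congr' ?_
  filter_upwards [eventually_ne_atTop 0] with x hx
  simp only [Function.comp, id, ← sub_eq_add_neg]
  field_simp
  ring

theorem stmt18_general (b σ c d : ℝ) (hc : 0 < c) :
    ∀ t : ℝ,
      Filter.Tendsto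
        (fun S : ℝ => S * vr b c d (Real.log S - σ ^ 2 * t / 8) / (S * Real.log S))
        Filter.atTop (nhds (3 / b)) := by
  intro t
  have h := (tendsto_comp_sub_div_of_tendsto_sub_mul (tendsto_vr_sub_mul b d hc)
    (σ ^ 2 * t / 8)).comp tendsto_log_atTop
  refine h.congr' ?_
  filter_upwards [eventually_ne_atTop 0] with S hS
  rw [Function.comp, mul_div_mul_left _ _ hS]

/-- Superlinear asymptotic growth of the invariant solution
`u_r(S,t) = S v_r(log S - σ²t/8)`: as `S → ∞`, `u_r(S,t)/(S log S) → 3/b`. -/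
theorem stmt18 (b σ c d : ℝ) (hb : b ≠ 0) (hσ : 0 < σ) (hc : 0 < c) :
    ∀ t : ℝ,
      Filter.Tendsto
        (fun S : ℝ => S * vr b c d (Real.log S - σ ^ 2 * t / 8) / (S * Real.log S))
        Filter.atTop (nhds (3 / b)) :=
  stmt18_general b σ c d hc
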